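/- arXiv:1908.01406 — 3 statements merged into one kernel-verified Lean document; each statement's English description precedes it below -/
import Mathlib

section
/- Any test of the i.i.d. Bernoulli null hypothesis with exact level α must be a permutation test: if φ is a test function on {0,1}^n such that E[φ(X)] = α whenever X = (X_1,...,X_n) is i.i.d. Bernoulli(p) for every p in (0,1), then for every fixed x in {0,1}^n, the average of φ over all n! permutations of the coordinates of x equals α. -/
open Finset Filter
open scoped BigOperators Classical

noncomputable section

/-- Indicator of a Boolean as a real number. -/
def ind (b : Bool) : ℝ := if b then 1 else 0

/-- Probability mass of an i.i.d. Bernoulli(p) binary vector. -/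
def mass (p : ℝ) {n : ℕ} (x : Fin n → Bool) : ℝ := ∏ j, (if x j then p else 1 - p)

/-- Extension of a finite binary vector to an infinite binary sequence (by `false`). -/
def ext {n : ℕ} (x : Fin n → Bool) : ℕ → Bool := fun j => if h : j < n then x ⟨j, h⟩ else false

/-- `V x n k = Σ_{j} Π_{l=j}^{j+k} x_l` : number of runs of `k+1` consecutive ones. -/
def V (x : ℕ → Bool) (n k : ℕ) : ℝ :=
  ∑ j ∈ Finset.range (n - k), ∏ l ∈ Finset.range (k + 1), ind (x (j + l))

/-- `W x n k` : number of runs of `k+1` consecutive zeros. -/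
def W (x : ℕ → Bool) (n k : ℕ) : ℝ :=
  ∑ j ∈ Finset.range (n - k), ∏ l ∈ Finset.range (k + 1), (1 - ind (x (j + l)))

/-- Proportion of successes directly following `k` consecutive successes. -/
def Phat (x : ℕ → Bool) (n k : ℕ) : ℝ := V x n k / V x n (k - 1)

/-- Difference of the success proportions after `k` consecutive successes / failures. -/
def Dhat (x : ℕ → Bool) (n k : ℕ) : ℝ := V x n k / V x n (k - 1) - W x n k / W x n (k - 1)

/-- Sample mean of a binary sequence. -/
def pbar (x : ℕ → Bool) (n : ℕ) : ℝ := (∑ j ∈ Finset.range n, ind (x j)) / n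

/-- Standard normal cumulative distribution function. -/
def Phi (t : ℝ) : ℝ := ((ProbabilityTheory.gaussianReal 0 1) (Set.Iic t)).toReal

/-- Probability of an event under i.i.d. Bernoulli(p) sampling of length `n`. -/
def Pr (p : ℝ) (n : ℕ) (E : (Fin n → Bool) → Prop) : ℝ :=
  ∑ x : Fin n → Bool, if E x then mass p x else 0

/-- Expectation of a statistic under i.i.d. Bernoulli(p) sampling of length `n`. -/
def Ex (p : ℝ) (n : ℕ) (f : (Fin n → Bool) → ℝ) : ℝ :=
  ∑ x : Fin n → Bool, mass p x * f x

namespace PermTestAux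

variable {n : ℕ}

def wt {n : ℕ} (x : Fin n → Bool) : ℕ := #(Finset.univ.filter fun j => x j = true)

lemma wt_le (x : Fin n → Bool) : wt x ≤ n := by
  classical
  simpa [wt] using (Finset.card_filter_le Finset.univ fun j => x j = true)

lemma mass_eq (p : ℝ) (x : Fin n → Bool) :
    mass p x = p ^ wt x * (1 - p) ^ (n - wt x) := by
  classical
  have h := Finset.card_filter_add_card_filter_not (s := (univ : Finset (Fin n)))
      (fun j => x j = true)
  have hc : #(univ.filter fun j => ¬ (x j = true)) = n - wt x := by
    have hw : wt x = #(univ.filter fun j => x j = true) := rfl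
    simp only [Finset.card_univ, Fintype.card_fin] at h
    omega
  calc mass p x = (∏ j ∈ univ.filter fun j => x j = true, p) *
        ∏ j ∈ univ.filter fun j => ¬ (x j = true), (1 - p) := by
        rw [mass]
        exact Finset.prod_ite (fun _ => p) (fun _ => 1 - p)
    _ = p ^ wt x * (1 - p) ^ (n - wt x) := by
        rw [Finset.prod_const, Finset.prod_const, hc]; rfl

/-- weight is invariant under permutation -/
lemma wt_comp (x : Fin n → Bool) (π : Equiv.Perm (Fin n)) : wt (x ∘ π) = wt x := by
  classical
  unfold wt
  apply Finset.card_bij (fun j _ => π j)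
  · intro a ha; simpa using (by simpa using ha)
  · intro a _ b _ h; exact π.injective h
  · intro b hb
    refine ⟨π.symm b, ?_, by simp⟩
    simpa using (by simpa using hb)

def S (n : ℕ) (φ : (Fin n → Bool) → ℝ) (k : ℕ) : ℝ :=
  ∑ x ∈ (univ : Finset (Fin n → Bool)).filter (fun x => wt x = k), φ x

lemma Ex_eq (p : ℝ) (φ : (Fin n → Bool) → ℝ) :
    Ex p n φ = ∑ k ∈ Finset.range (n+1), S n φ k * (p ^ k * (1 - p) ^ (n - k)) := by
  classical
  rw [Ex]
  rw [← Finset.sum_fiberwise_of_maps_to (g := wt) (t := Finset.range (n+1))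
      (fun x _ => Finset.mem_range.mpr (Nat.lt_succ_of_le (wt_le x)))]
  refine Finset.sum_congr rfl fun k _ => ?_
  rw [S, Finset.sum_mul]
  refine Finset.sum_congr rfl fun x hx => ?_
  have hk : wt x = k := (Finset.mem_filter.mp hx).2
  rw [mass_eq, hk]; ring

lemma S_eq (φ : (Fin n → Bool) → ℝ) (α : ℝ)
    (hlevel : ∀ p : ℝ, 0 < p → p < 1 → Ex p n φ = α) :
    ∀ k, k ≤ n → S n φ k = α * (n.choose k) := by
  classical
  set P : Polynomial ℝ := ∑ k ∈ Finset.range (n+1),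
    Polynomial.C (S n φ k - α * (n.choose k)) * Polynomial.X ^ k with hP
  have hroot : ∀ t : ℝ, 0 < t → P.eval t = 0 := by
    intro t ht
    have h1t : (0:ℝ) < 1 + t := by linarith
    set p : ℝ := t / (1 + t) with hp
    have hp0 : 0 < p := div_pos ht h1t
    have hp1 : p < 1 := (div_lt_one h1t).mpr (by linarith)
    have h1p : 1 - p = 1 / (1 + t) := by
      field_simp [hp]
      rw [hp, sub_mul, div_mul_cancel₀ _ (ne_of_gt h1t)]; ring
    have hE := hlevel p hp0 hp1
    rw [Ex_eq] at hE
    have hterm : ∀ k ∈ Finset.range (n+1),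
        S n φ k * (p ^ k * (1 - p) ^ (n - k)) = S n φ k * t ^ k / (1 + t) ^ n := by
      intro k hk
      have hkn : k ≤ n := Nat.lt_succ_iff.mp (Finset.mem_range.mp hk)
      rw [h1p, hp, div_pow, div_pow, one_pow]
      rw [div_mul_div_comm, mul_one, ← pow_add, Nat.add_sub_cancel' hkn]
      ring
    rw [Finset.sum_congr rfl hterm] at hE
    rw [← Finset.sum_div] at hE
    have hsum : ∑ k ∈ Finset.range (n+1), S n φ k * t ^ k = α * (1 + t) ^ n := by
      field_simp at hE
      linarith [hE]
    have hbin : (1 + t) ^ n = ∑ k ∈ Finset.range (n+1), t ^ k * (n.choose k : ℝ) := by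
      rw [add_comm 1 t, add_pow]
      exact Finset.sum_congr rfl fun k _ => by rw [one_pow, mul_one]
    rw [hP]
    simp only [Polynomial.eval_finset_sum, Polynomial.eval_mul, Polynomial.eval_C,
      Polynomial.eval_pow, Polynomial.eval_X]
    have : ∑ k ∈ Finset.range (n+1), (S n φ k - α * (n.choose k)) * t ^ k
        = (∑ k ∈ Finset.range (n+1), S n φ k * t ^ k)
          - α * ∑ k ∈ Finset.range (n+1), t ^ k * (n.choose k : ℝ) := by
      rw [Finset.mul_sum, ← Finset.sum_sub_distrib]
      exact Finset.sum_congr rfl fun k _ => by ring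
    rw [this, hsum, ← hbin]
    ring
  have hP0 : P = 0 := by
    apply Polynomial.eq_zero_of_infinite_isRoot
    apply Set.Infinite.mono (s := Set.Ioi (0:ℝ))
    · intro t ht; exact hroot t ht
    · exact Set.Ioi_infinite 0
  intro k hkn
  have hc : P.coeff k = S n φ k - α * (n.choose k) := by
    rw [hP, Polynomial.finset_sum_coeff]
    simp only [Polynomial.coeff_C_mul, Polynomial.coeff_X_pow]
    rw [Finset.sum_eq_single k]
    · simp
    · intro b _ hb; simp [Ne.symm hb]
    · intro h; exact absurd (Finset.mem_range.mpr (Nat.lt_succ_of_le hkn)) h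
  have := hc
  rw [hP0] at this
  simp at this
  linarith

end PermTestAux

namespace PermTestAux

lemma exists_perm {n : ℕ} (x y : Fin n → Bool) (h : wt x = wt y) :
    ∃ σ : Equiv.Perm (Fin n), x ∘ σ = y := by
  classical
  have hcard : Fintype.card {j // y j = true} = Fintype.card {j // x j = true} := by
    rw [Fintype.card_subtype, Fintype.card_subtype]; exact h.symm
  have hcard' : Fintype.card {j // ¬ (y j = true)} = Fintype.card {j // ¬ (x j = true)} := by
    rw [Fintype.card_subtype_compl, Fintype.card_subtype_compl, hcard]
  let e1 : {j // y j = true} ≃ {j // x j = true} := Fintype.equivOfCardEq hcard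
  let e2 : {j // ¬ (y j = true)} ≃ {j // ¬ (x j = true)} := Fintype.equivOfCardEq hcard'
  refine ⟨(Equiv.sumCompl (fun j => y j = true)).symm.trans
    ((e1.sumCongr e2).trans (Equiv.sumCompl (fun j => x j = true))), ?_⟩
  funext j
  simp only [Function.comp_apply, Equiv.trans_apply]
  by_cases hy : y j = true
  · rw [Equiv.sumCompl_symm_apply_of_pos (p := fun j => y j = true) hy]
    simp only [Equiv.sumCongr_apply, Sum.map_inl, Equiv.sumCompl_apply_inl]
    rw [(e1 ⟨j, hy⟩).2, hy]
  · rw [Equiv.sumCompl_symm_apply_of_neg (p := fun j => y j = true) hy]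
    simp only [Equiv.sumCongr_apply, Sum.map_inr, Equiv.sumCompl_apply_inr]
    have := (e2 ⟨j, hy⟩).2
    simp only [Bool.not_eq_true] at this hy
    rw [this, hy]

lemma card_wt {n : ℕ} (k : ℕ) :
    #((univ : Finset (Fin n → Bool)).filter fun x => wt x = k) = n.choose k := by
  classical
  have hpc : n.choose k = #(Finset.powersetCard k (univ : Finset (Fin n))) := by
    simp [Finset.card_powersetCard]
  rw [hpc]
  · apply Finset.card_bij (fun x _ => univ.filter fun j => x j = true)
    · intro x hx
      rw [Finset.mem_powersetCard]
      exact ⟨Finset.filter_subset _ _, (Finset.mem_filter.mp hx).2⟩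
    · intro a ha b hb hab
      funext j
      have : (j ∈ univ.filter fun i => a i = true) ↔ (j ∈ univ.filter fun i => b i = true) := by
        rw [hab]
      simp only [Finset.mem_filter, Finset.mem_univ, true_and] at this
      by_cases hA : a j = true
      · rw [hA, (this.mp hA)]
      · simp only [Bool.not_eq_true] at hA
        by_cases hB : b j = true
        · exact absurd (this.mpr hB) (by simp [hA])
        · simp only [Bool.not_eq_true] at hB; rw [hA, hB]
    · intro s hs
      rw [Finset.mem_powersetCard] at hs
      refine ⟨fun j => decide (j ∈ s), ?_, ?_⟩
      · rw [Finset.mem_filter]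
        refine ⟨Finset.mem_univ _, ?_⟩
        rw [← hs.2, wt]
        congr 1
        ext j
        simp
      · ext j
        simp

end PermTestAux

open PermTestAux in
/-- Any test with exact level α under every i.i.d. Bernoulli(p), p ∈ (0,1),
null must be a permutation test: the average of φ over all coordinate permutations of any
data point equals α. -/
theorem exact_level_implies_permutation_test
    (n : ℕ) (hn : 1 ≤ n) (α : ℝ) (φ : (Fin n → Bool) → ℝ)
    (hφ0 : ∀ x, 0 ≤ φ x) (hφ1 : ∀ x, φ x ≤ 1)
    (hlevel : ∀ p : ℝ, 0 < p → p < 1 → Ex p n φ = α) :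
    ∀ x : Fin n → Bool,
      (1 / (Nat.factorial n : ℝ)) * ∑ π : Equiv.Perm (Fin n), φ (x ∘ π) = α := by
  classical
  intro x
  set k := wt x with hk
  -- invariance of the permutation sum
  have hinv : ∀ σ : Equiv.Perm (Fin n),
      (∑ π : Equiv.Perm (Fin n), φ ((x ∘ σ) ∘ π)) = ∑ π : Equiv.Perm (Fin n), φ (x ∘ π) := by
    intro σ
    apply Fintype.sum_equiv (Equiv.mulLeft σ)
    intro π
    rfl
  -- sum over the weight class of the permutation sums
  have hsum1 : ∑ y ∈ (univ : Finset (Fin n → Bool)).filter (fun y => wt y = k),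
      (∑ π : Equiv.Perm (Fin n), φ (y ∘ π))
      = (n.choose k : ℝ) * ∑ π : Equiv.Perm (Fin n), φ (x ∘ π) := by
    rw [Finset.sum_congr rfl (fun y hy => ?_), Finset.sum_const, card_wt]
    · rw [nsmul_eq_mul]
    · have hwy : wt x = wt y := by
        rw [(Finset.mem_filter.mp hy).2, hk]
      obtain ⟨σ, hσ⟩ := exists_perm x y hwy
      rw [← hσ, hinv σ]
  have hsum2 : ∑ y ∈ (univ : Finset (Fin n → Bool)).filter (fun y => wt y = k),
      (∑ π : Equiv.Perm (Fin n), φ (y ∘ π))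
      = (n.factorial : ℝ) * S n φ k := by
    rw [Finset.sum_comm]
    have hinner : ∀ π : Equiv.Perm (Fin n),
        ∑ y ∈ (univ : Finset (Fin n → Bool)).filter (fun y => wt y = k), φ (y ∘ π)
        = S n φ k := by
      intro π
      rw [S]
      apply Finset.sum_equiv (π.symm.arrowCongr (Equiv.refl Bool))
      · intro y
        simp only [Finset.mem_filter, Finset.mem_univ, true_and]
        have : (π.symm.arrowCongr (Equiv.refl Bool)) y = y ∘ π := by
          funext j; simp [Equiv.arrowCongr]
        rw [this, wt_comp]
      · intro y _
        congr 1
    rw [Finset.sum_congr rfl (fun π _ => hinner π), Finset.sum_const, Finset.card_univ,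
      Fintype.card_perm, Fintype.card_fin, nsmul_eq_mul]
  have hS := S_eq φ α hlevel k (wt_le x)
  have hchoose : (0:ℝ) < (n.choose k : ℝ) := by
    exact_mod_cast Nat.choose_pos (wt_le x)
  have hkey : ∑ π : Equiv.Perm (Fin n), φ (x ∘ π) = (n.factorial : ℝ) * α := by
    have := hsum1.symm.trans hsum2
    rw [hS] at this
    have h2 : (n.choose k : ℝ) * ∑ π : Equiv.Perm (Fin n), φ (x ∘ π)
        = (n.choose k : ℝ) * ((n.factorial : ℝ) * α) := by
      rw [this]; ring
    exact mul_left_cancel₀ (ne_of_gt hchoose) h2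
  rw [hkey]
  have hf : (n.factorial : ℝ) ≠ 0 := by
    exact_mod_cast Nat.factorial_ne_zero n
  field_simp
end
end

section
/- For the exact law of D̂_{n,1}: if X_1,...,X_n are exchangeable binary random variables (in particular i.i.d. Bernoulli(p)), then conditional on the event that D̂_{n,1}(X) is defined, E[D̂_{n,1}(X)] = −1/(n−1). -/
open Finset Filter
open scoped BigOperators Classical

noncomputable section

/-- Number of indices `j ≤ n−1` (0-indexed: `j < n−1`) with `x j = b`. -/
def Nb (x : ℕ → Bool) (n : ℕ) (b : Bool) : ℕ :=
  ((Finset.range (n - 1)).filter (fun j => x j = b)).card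

/-- Number of indices `j < n−1` with `x j = b` followed by a one. -/
def Mb (x : ℕ → Bool) (n : ℕ) (b : Bool) : ℕ :=
  ((Finset.range (n - 1)).filter (fun j => x j = b ∧ x (j + 1) = true)).card

/-- `D̂_{n,1}`: fraction of ones following a one minus fraction of ones following a zero,
with the conditioning index restricted to the first `n−1` entries. -/
def D1 (x : ℕ → Bool) (n : ℕ) : ℝ :=
  (Mb x n true : ℝ) / (Nb x n true : ℝ) - (Mb x n false : ℝ) / (Nb x n false : ℝ)

/-- `D̂_{n,1}` is defined: at least one 1 and one 0 among the first `n−1` entries. -/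
def D1def (x : ℕ → Bool) (n : ℕ) : Prop := 0 < Nb x n true ∧ 0 < Nb x n false

namespace MSbias

variable {n : ℕ}

/-- number of ones of a finite binary vector -/
def oc {n : ℕ} (x : Fin n → Bool) : ℕ := (Finset.univ.filter (fun i => x i = true)).card

/-- the composition class: binary vectors with exactly `k` ones -/
def cls (n k : ℕ) : Finset (Fin n → Bool) := Finset.univ.filter (fun x => oc x = k)

/-- number of vectors with `k` ones satisfying `P` -/
def cnt (n k : ℕ) (P : (Fin n → Bool) → Prop) : ℕ := ((cls n k).filter P).card

lemma oc_comp (π : Equiv.Perm (Fin n)) (x : Fin n → Bool) : oc (x ∘ π) = oc x := by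
  unfold oc
  apply Finset.card_bij (fun i _ => π i)
  · intro a ha; simp at ha ⊢; exact ha
  · intro a _ b _ h; exact π.injective h
  · intro b hb; refine ⟨π.symm b, ?_, by simp⟩; simp at hb ⊢; simpa using hb

lemma cnt_comp (π : Equiv.Perm (Fin n)) (k : ℕ) (P : (Fin n → Bool) → Prop) :
    cnt n k (fun x => P (x ∘ π)) = cnt n k P := by
  unfold cnt cls
  apply Finset.card_bij (fun x _ => x ∘ π)
  · intro a ha; simp only [Finset.mem_filter, Finset.mem_univ, true_and] at ha ⊢
    exact ⟨by rw [oc_comp]; exact ha.1, ha.2⟩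
  · intro a _ b _ h
    funext i
    have := congrFun h (π.symm i); simpa using this
  · intro b hb
    refine ⟨b ∘ π.symm, ?_, ?_⟩
    · simp only [Finset.mem_filter, Finset.mem_univ, true_and] at hb ⊢
      constructor
      · rw [oc_comp π.symm]; exact hb.1
      · have : (b ∘ ⇑π.symm) ∘ ⇑π = b := by funext i; simp
        rw [this]; exact hb.2
    · funext i; simp

lemma exists_perm_pair {i j i' j' : Fin n} (h : i ≠ j) (h' : i' ≠ j') :
    ∃ π : Equiv.Perm (Fin n), π i = i' ∧ π j = j' := by
  have h1 : i' ≠ Equiv.swap i i' j := by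
    intro hc
    apply h
    apply (Equiv.swap i i').injective
    rw [Equiv.swap_apply_left, ← hc]
  refine ⟨(Equiv.swap i i').trans (Equiv.swap (Equiv.swap i i' j) j'), ?_, ?_⟩
  · simp only [Equiv.trans_apply, Equiv.swap_apply_left]
    exact Equiv.swap_apply_of_ne_of_ne h1 h'
  · simp only [Equiv.trans_apply, Equiv.swap_apply_left]

lemma exists_perm_triple {i j l i' j' l' : Fin n} (hij : i ≠ j) (hil : i ≠ l) (hjl : j ≠ l)
    (hij' : i' ≠ j') (hil' : i' ≠ l') (hjl' : j' ≠ l') :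
    ∃ π : Equiv.Perm (Fin n), π i = i' ∧ π j = j' ∧ π l = l' := by
  obtain ⟨σ, hσi, hσj⟩ := exists_perm_pair hij hij'
  refine ⟨σ.trans (Equiv.swap (σ l) l'), ?_, ?_, ?_⟩
  · simp only [Equiv.trans_apply, hσi]
    rw [Equiv.swap_apply_of_ne_of_ne]
    · rw [← hσi]; exact fun hc => hil (σ.injective hc.symm).symm
    · exact hil'
  · simp only [Equiv.trans_apply, hσj]
    rw [Equiv.swap_apply_of_ne_of_ne]
    · rw [← hσj]; exact fun hc => hjl (σ.injective hc.symm).symm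
    · exact hjl'
  · simp only [Equiv.trans_apply, Equiv.swap_apply_left]

lemma cnt_congr (k : ℕ) (P Q : (Fin n → Bool) → Prop) (h : ∀ x, P x ↔ Q x) :
    cnt n k P = cnt n k Q := by
  unfold cnt; congr 1; exact Finset.filter_congr (fun x _ => h x)

lemma cnt_single (k : ℕ) (i i' : Fin n) (b : Bool) :
    cnt n k (fun x => x i = b) = cnt n k (fun x => x i' = b) := by
  obtain ⟨π, hπ⟩ : ∃ π : Equiv.Perm (Fin n), π i' = i := ⟨Equiv.swap i' i, Equiv.swap_apply_left _ _⟩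
  have := cnt_comp π k (fun x => x i' = b)
  simpa [hπ] using this

lemma cnt_pair (k : ℕ) {i j i' j' : Fin n} (h : i ≠ j) (h' : i' ≠ j') (b c : Bool) :
    cnt n k (fun x => x i = b ∧ x j = c) = cnt n k (fun x => x i' = b ∧ x j' = c) := by
  obtain ⟨π, hπi, hπj⟩ := exists_perm_pair h' h
  have := cnt_comp π k (fun x => x i' = b ∧ x j' = c)
  simp only [Function.comp_apply, hπi, hπj] at this
  exact this

lemma cnt_triple (k : ℕ) {i j l i' j' l' : Fin n} (hij : i ≠ j) (hil : i ≠ l) (hjl : j ≠ l)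
    (hij' : i' ≠ j') (hil' : i' ≠ l') (hjl' : j' ≠ l') (a b c : Bool) :
    cnt n k (fun x => x i = a ∧ x j = b ∧ x l = c)
      = cnt n k (fun x => x i' = a ∧ x j' = b ∧ x l' = c) := by
  obtain ⟨π, hπi, hπj, hπl⟩ := exists_perm_triple hij' hil' hjl' hij hil hjl
  have := cnt_comp π k (fun x => x i' = a ∧ x j' = b ∧ x l' = c)
  simp only [Function.comp_apply, hπi, hπj, hπl] at this
  exact this

/-- generic sum swap: summing counts over an index set -/

lemma swap_count {α : Type*} (s : Finset α) (k : ℕ) (A : (Fin n → Bool) → Prop)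
    (B : (Fin n → Bool) → α → Prop) :
    ∑ a ∈ s, cnt n k (fun x => A x ∧ B x a)
      = ∑ x ∈ (cls n k).filter A, (s.filter (B x)).card := by
  have key : ∀ a : α, cnt n k (fun x => A x ∧ B x a)
      = ∑ x ∈ cls n k, if A x ∧ B x a then 1 else 0 := by
    intro a; unfold cnt; rw [Finset.card_filter]
    exact Finset.sum_congr rfl fun x _ => by convert rfl
  have key2 : ∀ x : Fin n → Bool, (s.filter (B x)).card
      = ∑ a ∈ s, if B x a then 1 else 0 := by
    intro x; rw [Finset.card_filter]
  calc ∑ a ∈ s, cnt n k (fun x => A x ∧ B x a)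
      = ∑ a ∈ s, ∑ x ∈ cls n k, if A x ∧ B x a then 1 else 0 :=
        Finset.sum_congr rfl (fun a _ => key a)
    _ = ∑ x ∈ cls n k, ∑ a ∈ s, if A x ∧ B x a then 1 else 0 := Finset.sum_comm
    _ = ∑ x ∈ cls n k, if A x then ∑ a ∈ s, if B x a then 1 else 0 else 0 := by
        apply Finset.sum_congr rfl; intro x _
        by_cases hA : A x
        · simp only [hA, if_true, true_and]
        · simp [hA]
    _ = ∑ x ∈ (cls n k).filter A, ∑ a ∈ s, if B x a then 1 else 0 :=
        (Finset.sum_filter _ _).symm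
    _ = ∑ x ∈ (cls n k).filter A, (s.filter (B x)).card :=
        Finset.sum_congr rfl (fun x _ => (key2 x).symm)

lemma mem_cls {k : ℕ} {x : Fin n → Bool} (hx : x ∈ cls n k) : oc x = k := by
  simpa [cls] using hx

lemma oc_le (x : Fin n → Bool) : oc x ≤ n := by
  simpa [oc] using (Finset.card_filter_le Finset.univ (fun i => x i = true))

lemma card_false (x : Fin n → Bool) :
    (Finset.univ.filter (fun j => x j = false)).card = n - oc x := by
  have h := Finset.card_filter_add_card_filter_not
    (s := (Finset.univ : Finset (Fin n))) (p := fun j => x j = true)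
  have h2 : (Finset.univ.filter (fun j => ¬ x j = true)).card
      = (Finset.univ.filter (fun j => x j = false)).card := by
    apply Finset.card_nbij id
    · intro a ha; simp at ha ⊢; simpa using ha
    · intro a _ b _ hab; exact hab
    · intro b hb; simp at hb ⊢; simpa using hb
  simp only [Finset.card_univ, Fintype.card_fin] at h
  unfold oc
  omega

lemma inner_erase_true (x : Fin n → Bool) (i : Fin n) :
    ((Finset.univ.erase i).filter (fun j => x j = true)).card
      = oc x - (if x i then 1 else 0) := by
  rw [Finset.filter_erase]
  by_cases h : x i
  · rw [Finset.card_erase_of_mem (by simp [h])]; simp [h, oc]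
  · rw [Finset.erase_eq_of_notMem (by simp [h])]; simp [h, oc]

lemma inner_erase_false (x : Fin n → Bool) (i : Fin n) :
    ((Finset.univ.erase i).filter (fun j => x j = false)).card
      = (n - oc x) - (if x i then 0 else 1) := by
  rw [Finset.filter_erase]
  by_cases h : x i
  · rw [Finset.erase_eq_of_notMem (by simp [h])]; simp [h, card_false]
  · rw [Finset.card_erase_of_mem (by simp [h])]; simp [h, card_false]

lemma inner_erase2_true (x : Fin n → Bool) (i j : Fin n) (hij : i ≠ j) :
    (((Finset.univ.erase i).erase j).filter (fun l => x l = true)).card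
      = oc x - (if x i then 1 else 0) - (if x j then 1 else 0) := by
  rw [Finset.filter_erase]
  by_cases h : x j
  · rw [Finset.card_erase_of_mem (by simp [h, Ne.symm hij])]
    rw [inner_erase_true]; simp [h]
  · rw [Finset.erase_eq_of_notMem (by simp [h])]
    rw [inner_erase_true]; simp [h]

lemma inner_erase2_false (x : Fin n → Bool) (i j : Fin n) (hij : i ≠ j) :
    (((Finset.univ.erase i).erase j).filter (fun l => x l = false)).card
      = (n - oc x) - (if x i then 0 else 1) - (if x j then 0 else 1) := by
  rw [Finset.filter_erase]
  by_cases h : x j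
  · rw [Finset.erase_eq_of_notMem (by simp [h])]
    rw [inner_erase_false]; simp [h]
  · rw [Finset.card_erase_of_mem (by simp [h, Ne.symm hij])]
    rw [inner_erase_false]; simp [h]

lemma card_filter_congr {β : Type*} {s : Finset β} {p q : β → Prop} {dp : DecidablePred p}
    {dq : DecidablePred q} (h : ∀ x, p x ↔ q x) :
    (@Finset.filter β p dp s).card = (@Finset.filter β q dq s).card :=
  congrArg Finset.card (Finset.filter_congr (fun x _ => h x))

lemma card_erase_univ (i : Fin n) : (Finset.univ.erase i).card = n - 1 := by
  rw [Finset.card_erase_of_mem (Finset.mem_univ i)]; simp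

lemma card_erase2_univ {i j : Fin n} (hij : i ≠ j) :
    ((Finset.univ.erase i).erase j).card = n - 2 := by
  rw [Finset.card_erase_of_mem (Finset.mem_erase.mpr ⟨Ne.symm hij, Finset.mem_univ j⟩),
    card_erase_univ]
  omega

lemma r2 (k : ℕ) {i j : Fin n} (hij : i ≠ j) (b : Bool) :
    (n - 1) * cnt n k (fun x => x i = b ∧ x j = true)
      = (k - (if b then 1 else 0)) * cnt n k (fun x => x i = b) := by
  have h := swap_count (Finset.univ.erase i) k (fun x => x i = b) (fun x a => x a = true)
  have hL : ∑ a ∈ Finset.univ.erase i, cnt n k (fun x => x i = b ∧ x a = true)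
      = (n - 1) * cnt n k (fun x => x i = b ∧ x j = true) := by
    calc ∑ a ∈ Finset.univ.erase i, cnt n k (fun x => x i = b ∧ x a = true)
        = ∑ _a ∈ Finset.univ.erase i, cnt n k (fun x => x i = b ∧ x j = true) :=
          Finset.sum_congr rfl (fun a ha => cnt_pair k
            (Ne.symm (Finset.mem_erase.mp ha).1) hij b true)
      _ = (n - 1) * cnt n k (fun x => x i = b ∧ x j = true) := by
          rw [Finset.sum_const, card_erase_univ, smul_eq_mul]
  rw [← hL, h]
  rw [Finset.sum_const_nat (fun x hx => ?_), Nat.mul_comm]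
  · rfl
  · have hx' : x ∈ cls n k ∧ x i = b := by
      simpa using hx
    refine Eq.trans (Eq.trans (card_filter_congr (fun a => Iff.rfl)) (inner_erase_true x i)) ?_
    rw [mem_cls hx'.1, hx'.2]

lemma r2f (k : ℕ) {i j : Fin n} (hij : i ≠ j) (b : Bool) :
    (n - 1) * cnt n k (fun x => x i = b ∧ x j = false)
      = ((n - k) - (if b then 0 else 1)) * cnt n k (fun x => x i = b) := by
  have h := swap_count (Finset.univ.erase i) k (fun x => x i = b) (fun x a => x a = false)
  have hL : ∑ a ∈ Finset.univ.erase i, cnt n k (fun x => x i = b ∧ x a = false)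
      = (n - 1) * cnt n k (fun x => x i = b ∧ x j = false) := by
    calc ∑ a ∈ Finset.univ.erase i, cnt n k (fun x => x i = b ∧ x a = false)
        = ∑ _a ∈ Finset.univ.erase i, cnt n k (fun x => x i = b ∧ x j = false) :=
          Finset.sum_congr rfl (fun a ha => cnt_pair k
            (Ne.symm (Finset.mem_erase.mp ha).1) hij b false)
      _ = (n - 1) * cnt n k (fun x => x i = b ∧ x j = false) := by
          rw [Finset.sum_const, card_erase_univ, smul_eq_mul]
  rw [← hL, h]
  rw [Finset.sum_const_nat (fun x hx => ?_), Nat.mul_comm]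
  · rfl
  · have hx' : x ∈ cls n k ∧ x i = b := by
      simpa using hx
    refine Eq.trans (Eq.trans (card_filter_congr (fun a => Iff.rfl)) (inner_erase_false x i)) ?_
    rw [mem_cls hx'.1, hx'.2]

lemma r3t (k : ℕ) {i j l : Fin n} (hij : i ≠ j) (hil : i ≠ l) (hjl : j ≠ l) (a b : Bool) :
    (n - 2) * cnt n k (fun x => x i = a ∧ x j = b ∧ x l = true)
      = (k - (if a then 1 else 0) - (if b then 1 else 0))
          * cnt n k (fun x => x i = a ∧ x j = b) := by
  have h := swap_count ((Finset.univ.erase i).erase j) k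
    (fun x => x i = a ∧ x j = b) (fun x c => x c = true)
  have hL : ∑ c ∈ (Finset.univ.erase i).erase j,
      cnt n k (fun x => (x i = a ∧ x j = b) ∧ x c = true)
      = (n - 2) * cnt n k (fun x => x i = a ∧ x j = b ∧ x l = true) := by
    calc ∑ c ∈ (Finset.univ.erase i).erase j,
        cnt n k (fun x => (x i = a ∧ x j = b) ∧ x c = true)
        = ∑ _c ∈ (Finset.univ.erase i).erase j,
            cnt n k (fun x => x i = a ∧ x j = b ∧ x l = true) := by
          refine Finset.sum_congr rfl (fun c hc => ?_)
          have hc' := Finset.mem_erase.mp hc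
          have hc'' := Finset.mem_erase.mp hc'.2
          rw [cnt_congr k _ _ (fun x => (and_assoc))]
          exact cnt_triple k hij (Ne.symm hc''.1) (Ne.symm hc'.1) hij hil hjl a b true
      _ = (n - 2) * cnt n k (fun x => x i = a ∧ x j = b ∧ x l = true) := by
          rw [Finset.sum_const, card_erase2_univ hij, smul_eq_mul]
  rw [← hL, h]
  rw [Finset.sum_const_nat (fun x hx => ?_), Nat.mul_comm]
  · rfl
  · have hx' : x ∈ cls n k ∧ (x i = a ∧ x j = b) := by
      simpa using hx
    refine Eq.trans (Eq.trans (card_filter_congr (fun c => Iff.rfl)) (inner_erase2_true x i j hij)) ?_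
    rw [mem_cls hx'.1, hx'.2.1, hx'.2.2]

lemma ext_lt {x : Fin n → Bool} {j : ℕ} (h : j < n) : ext x j = x ⟨j, h⟩ := dif_pos h

lemma Nb_eq (hn : 1 ≤ n) (x : Fin n → Bool) (b : Bool) :
    Nb (ext x) n b
      = ((Finset.univ.erase (⟨n - 1, by omega⟩ : Fin n)).filter (fun i => x i = b)).card := by
  unfold Nb
  apply Finset.card_bij (fun j hj => (⟨j, by
    have := Finset.mem_filter.mp hj
    have := Finset.mem_range.mp this.1
    omega⟩ : Fin n))
  · intro j hj
    have h1 := Finset.mem_filter.mp hj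
    have h2 := Finset.mem_range.mp h1.1
    refine Finset.mem_filter.mpr ⟨Finset.mem_erase.mpr ⟨?_, Finset.mem_univ _⟩, ?_⟩
    · intro hc
      have := congrArg Fin.val hc
      simp at this
      omega
    · have := h1.2
      rwa [ext_lt (by omega : j < n)] at this
  · intro a ha b' hb' hab
    have := congrArg Fin.val hab
    simpa using this
  · intro i hi
    have h1 := Finset.mem_filter.mp hi
    have h2 := Finset.mem_erase.mp h1.1
    have hv : (i : ℕ) < n - 1 := by
      have : (i : ℕ) ≠ n - 1 := fun hc => h2.1 (Fin.ext hc)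
      have := i.isLt
      omega
    refine ⟨(i : ℕ), Finset.mem_filter.mpr ⟨Finset.mem_range.mpr hv, ?_⟩, ?_⟩
    · rw [ext_lt i.isLt]
      simpa using h1.2
    · exact (Fin.ext rfl).symm

lemma Nb_true_val (hn : 1 ≤ n) (x : Fin n → Bool) :
    Nb (ext x) n true = oc x - (if x ⟨n - 1, by omega⟩ then 1 else 0) := by
  rw [Nb_eq hn x true, inner_erase_true]

lemma Nb_false_val (hn : 1 ≤ n) (x : Fin n → Bool) :
    Nb (ext x) n false = (n - oc x) - (if x ⟨n - 1, by omega⟩ then 0 else 1) := by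
  rw [Nb_eq hn x false, inner_erase_false]

lemma cnt_falsePred (k : ℕ) : cnt n k (fun _ => False) = 0 := by
  unfold cnt
  simp

lemma sum_filter_congr {β M : Type*} [AddCommMonoid M] {s : Finset β} {p q : β → Prop}
    {dp : DecidablePred p} {dq : DecidablePred q} (h : ∀ x, p x ↔ q x) (f : β → M) :
    ∑ x ∈ @Finset.filter β p dp s, f x = ∑ x ∈ @Finset.filter β q dq s, f x := by
  rw [Finset.filter_congr (fun x _ => h x)]

lemma sum_Mb_gen (hn : 3 ≤ n) (k : ℕ) (a b : Bool) :
    ∑ x ∈ (cls n k).filter (fun x => x (⟨n - 1, by omega⟩ : Fin n) = a), Mb (ext x) n b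
      = (n - 2) * cnt n k (fun x => x (⟨0, by omega⟩ : Fin n) = a
            ∧ x (⟨1, by omega⟩ : Fin n) = b ∧ x (⟨2, by omega⟩ : Fin n) = true)
        + (if a then cnt n k (fun x => x (⟨0, by omega⟩ : Fin n) = a
            ∧ x (⟨1, by omega⟩ : Fin n) = b) else 0) := by
  have hpL : n - 1 < n := by omega
  have hpM : n - 2 < n := by omega
  have hp0 : 0 < n := by omega
  have hp1 : 1 < n := by omega
  have hp2 : 2 < n := by omega
  have e1 : n - 2 + 1 = n - 1 := by omega
  have hsplit : Finset.range (n - 1) = insert (n - 2) (Finset.range (n - 2)) := by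
    have e : n - 1 = n - 2 + 1 := by omega
    rw [e, Finset.range_add_one]
  have hne1 : (⟨n - 1, hpL⟩ : Fin n) ≠ (⟨n - 2, hpM⟩ : Fin n) := by
    simp only [ne_eq, Fin.mk.injEq]; omega
  have hne2 : (⟨0, hp0⟩ : Fin n) ≠ (⟨1, hp1⟩ : Fin n) := by
    simp only [ne_eq, Fin.mk.injEq]; omega
  have hne3 : (⟨0, hp0⟩ : Fin n) ≠ (⟨2, hp2⟩ : Fin n) := by
    simp only [ne_eq, Fin.mk.injEq]; omega
  have hne4 : (⟨1, hp1⟩ : Fin n) ≠ (⟨2, hp2⟩ : Fin n) := by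
    simp only [ne_eq, Fin.mk.injEq]; omega
  have h0 : ∑ x ∈ (cls n k).filter (fun x => x (⟨n - 1, hpL⟩ : Fin n) = a),
      Mb (ext x) n b
      = ∑ j ∈ Finset.range (n - 1), cnt n k (fun x =>
          x (⟨n - 1, hpL⟩ : Fin n) = a ∧ (ext x j = b ∧ ext x (j + 1) = true)) := by
    rw [swap_count]
    refine Eq.trans (sum_filter_congr (fun x => Iff.rfl) _)
      (Finset.sum_congr rfl fun x _ => ?_)
    unfold Mb
    exact card_filter_congr (fun j => Iff.rfl)
  rw [h0, hsplit, Finset.sum_insert (by simp)]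
  have hterm : cnt n k (fun x =>
      x (⟨n - 1, hpL⟩ : Fin n) = a ∧ (ext x (n - 2) = b ∧ ext x (n - 2 + 1) = true))
      = (if a then cnt n k (fun x => x (⟨0, hp0⟩ : Fin n) = a
            ∧ x (⟨1, hp1⟩ : Fin n) = b) else 0) := by
    clear h0
    cases a
    · have hiff : ∀ x : Fin n → Bool,
          (x (⟨n - 1, hpL⟩ : Fin n) = false
            ∧ (ext x (n - 2) = b ∧ ext x (n - 2 + 1) = true)) ↔ False := by
        intro x
        rw [e1, ext_lt hpM, ext_lt hpL]
        simp only [iff_false]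
        rintro ⟨h1, _, h3⟩
        rw [h1] at h3
        exact Bool.noConfusion h3
      rw [cnt_congr k _ _ hiff, cnt_falsePred]
      simp
    · have hiff : ∀ x : Fin n → Bool,
          (x (⟨n - 1, hpL⟩ : Fin n) = true
            ∧ (ext x (n - 2) = b ∧ ext x (n - 2 + 1) = true)) ↔
          (x (⟨n - 1, hpL⟩ : Fin n) = true ∧ x (⟨n - 2, hpM⟩ : Fin n) = b) := by
        intro x
        rw [e1, ext_lt hpM, ext_lt hpL]
        constructor
        · rintro ⟨h1, h2, _⟩; exact ⟨h1, h2⟩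
        · rintro ⟨h1, h2⟩; exact ⟨h1, h2, h1⟩
      rw [cnt_congr k _ _ hiff, cnt_pair k hne1 hne2 true b]
      simp
  rw [hterm]
  have hrest : ∀ j ∈ Finset.range (n - 2), cnt n k (fun x =>
      x (⟨n - 1, hpL⟩ : Fin n) = a ∧ (ext x j = b ∧ ext x (j + 1) = true))
      = cnt n k (fun x => x (⟨0, hp0⟩ : Fin n) = a
          ∧ x (⟨1, hp1⟩ : Fin n) = b ∧ x (⟨2, hp2⟩ : Fin n) = true) := by
    clear h0 hterm hsplit
    intro j hj
    have hj' : j < n - 2 := Finset.mem_range.mp hj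
    clear hj
    have hjn : j < n := by omega
    have hj1n : j + 1 < n := by omega
    have ha1 : (⟨n - 1, hpL⟩ : Fin n) ≠ (⟨j, hjn⟩ : Fin n) :=
      Fin.ne_of_val_ne (by simp only []; omega)
    have ha2 : (⟨n - 1, hpL⟩ : Fin n) ≠ (⟨j + 1, hj1n⟩ : Fin n) :=
      Fin.ne_of_val_ne (by simp only []; omega)
    have ha3 : (⟨j, hjn⟩ : Fin n) ≠ (⟨j + 1, hj1n⟩ : Fin n) :=
      Fin.ne_of_val_ne (by simp only []; omega)
    have hiff : ∀ x : Fin n → Bool,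
        (x (⟨n - 1, hpL⟩ : Fin n) = a ∧ (ext x j = b ∧ ext x (j + 1) = true)) ↔
        (x (⟨n - 1, hpL⟩ : Fin n) = a
          ∧ x (⟨j, hjn⟩ : Fin n) = b ∧ x (⟨j + 1, hj1n⟩ : Fin n) = true) := by
      intro x
      rw [ext_lt hjn, ext_lt hj1n]
    rw [cnt_congr k _ _ hiff]
    exact cnt_triple k ha1 ha2 ha3 hne2 hne3 hne4 a b true
  rw [Finset.sum_congr rfl hrest, Finset.sum_const, Finset.card_range, smul_eq_mul]
  exact Nat.add_comm _ _

lemma partA (hn : 3 ≤ n) (k : ℕ) :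
    ∑ x ∈ (cls n k).filter (fun x => x (⟨n - 1, by omega⟩ : Fin n) = true),
        (if D1def (ext x) n then D1 (ext x) n else 0)
      = (-1 / ((n : ℝ) - 1)) *
        ((((cls n k).filter (fun x => x (⟨n - 1, by omega⟩ : Fin n) = true)).filter
            (fun x => D1def (ext x) n)).card : ℝ) := by
  have hpL : n - 1 < n := by omega
  have hp0 : 0 < n := by omega
  have hp1 : 1 < n := by omega
  have hp2 : 2 < n := by omega
  have hn1 : 1 ≤ n := by omega
  -- characterize definedness on this part
  have hdef : ∀ x ∈ (cls n k).filter (fun x => x (⟨n - 1, hpL⟩ : Fin n) = true),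
      (D1def (ext x) n ↔ (2 ≤ k ∧ k ≤ n - 1)) := by
    intro x hx
    have hx' : x ∈ cls n k ∧ x (⟨n - 1, hpL⟩ : Fin n) = true := by simpa using hx
    have hk := mem_cls hx'.1
    have hkn : k ≤ n := by
      rw [← hk]
      simpa [oc] using Finset.card_filter_le Finset.univ (fun i => x i = true)
    unfold D1def
    rw [Nb_true_val hn1 x, Nb_false_val hn1 x, hk, hx'.2]
    simp only [if_true]
    omega
  by_cases hkr : 2 ≤ k ∧ k ≤ n - 1
  · -- all defined
    obtain ⟨hk2, hk1⟩ := hkr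
    have hkn : k ≤ n - 1 := hk1
    -- remove the if
    rw [Finset.sum_congr rfl (fun x hx => if_pos ((hdef x hx).mpr ⟨hk2, hk1⟩))]
    rw [Finset.filter_true_of_mem (fun x hx => (hdef x hx).mpr ⟨hk2, hk1⟩)]
    have hkn' : k ≤ n := by omega
    have hk1' : 1 ≤ k := by omega
    have e1 : k - 1 - 1 + 1 = k - 1 := by omega
    have e2 : k - 1 + 1 = k := by omega
    have hne2 : (⟨0, hp0⟩ : Fin n) ≠ (⟨1, hp1⟩ : Fin n) :=
      Fin.ne_of_val_ne (show (0 : ℕ) ≠ 1 by omega)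
    have hne3 : (⟨0, hp0⟩ : Fin n) ≠ (⟨2, hp2⟩ : Fin n) :=
      Fin.ne_of_val_ne (show (0 : ℕ) ≠ 2 by omega)
    have hne4 : (⟨1, hp1⟩ : Fin n) ≠ (⟨2, hp2⟩ : Fin n) :=
      Fin.ne_of_val_ne (show (1 : ℕ) ≠ 2 by omega)
    -- rewrite D1 pointwise
    have hD : ∀ x ∈ (cls n k).filter (fun x => x (⟨n - 1, hpL⟩ : Fin n) = true),
        D1 (ext x) n = (Mb (ext x) n true : ℝ) / ((k : ℝ) - 1)
          - (Mb (ext x) n false : ℝ) / ((n : ℝ) - (k : ℝ)) := by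
      intro x hx
      have hx' : x ∈ cls n k ∧ x (⟨n - 1, hpL⟩ : Fin n) = true := by simpa using hx
      have hk := mem_cls hx'.1
      unfold D1
      rw [Nb_true_val hn1 x, Nb_false_val hn1 x, hk, hx'.2]
      simp only [if_true, Nat.sub_zero]
      rw [Nat.cast_sub hk1', Nat.cast_sub hkn']
      norm_num
    rw [Finset.sum_congr rfl hD, Finset.sum_sub_distrib, ← Finset.sum_div, ← Finset.sum_div,
      ← Nat.cast_sum, ← Nat.cast_sum]
    -- evaluate the two Mb-sums
    have hM1 : ∑ x ∈ (cls n k).filter (fun x => x (⟨n - 1, hpL⟩ : Fin n) = true),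
        Mb (ext x) n true
        = (k - 1) * cnt n k (fun x => x (⟨0, hp0⟩ : Fin n) = true
            ∧ x (⟨1, hp1⟩ : Fin n) = true) := by
      rw [sum_Mb_gen hn k true true]
      simp only [if_true]
      rw [r3t k hne2 hne3 hne4 true true]
      simp only [if_true]
      calc (k - 1 - 1) * cnt n k (fun x => x (⟨0, hp0⟩ : Fin n) = true
              ∧ x (⟨1, hp1⟩ : Fin n) = true)
            + cnt n k (fun x => x (⟨0, hp0⟩ : Fin n) = true ∧ x (⟨1, hp1⟩ : Fin n) = true)
          = (k - 1 - 1 + 1) * cnt n k (fun x => x (⟨0, hp0⟩ : Fin n) = true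
              ∧ x (⟨1, hp1⟩ : Fin n) = true) := (Nat.succ_mul _ _).symm
        _ = _ := by rw [e1]
    have hM0 : ∑ x ∈ (cls n k).filter (fun x => x (⟨n - 1, hpL⟩ : Fin n) = true),
        Mb (ext x) n false
        = k * cnt n k (fun x => x (⟨0, hp0⟩ : Fin n) = true
            ∧ x (⟨1, hp1⟩ : Fin n) = false) := by
      rw [sum_Mb_gen hn k true false]
      simp only [if_true]
      rw [r3t k hne2 hne3 hne4 true false]
      simp only [if_true, Bool.false_eq_true, if_false, Nat.sub_zero]
      calc (k - 1) * cnt n k (fun x => x (⟨0, hp0⟩ : Fin n) = true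
              ∧ x (⟨1, hp1⟩ : Fin n) = false)
            + cnt n k (fun x => x (⟨0, hp0⟩ : Fin n) = true ∧ x (⟨1, hp1⟩ : Fin n) = false)
          = (k - 1 + 1) * cnt n k (fun x => x (⟨0, hp0⟩ : Fin n) = true
              ∧ x (⟨1, hp1⟩ : Fin n) = false) := (Nat.succ_mul _ _).symm
        _ = _ := by rw [e2]
    rw [hM1, hM0]
    -- the count of the part
    have hcard : (((cls n k).filter (fun x => x (⟨n - 1, hpL⟩ : Fin n) = true)).card)
        = cnt n k (fun x => x (⟨n - 1, hpL⟩ : Fin n) = true) :=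
      card_filter_congr (fun x => Iff.rfl)
    rw [hcard, cnt_single k (⟨n - 1, hpL⟩ : Fin n) (⟨0, hp0⟩ : Fin n) true]
    -- relations
    have hR1 := r2 k hne2 true
    have hR2 := r2f k hne2 true
    simp only [if_true, Nat.sub_zero] at hR1 hR2
    -- pass to the reals
    set A := cnt n k (fun x => x (⟨0, hp0⟩ : Fin n) = true ∧ x (⟨1, hp1⟩ : Fin n) = true)
    set B := cnt n k (fun x => x (⟨0, hp0⟩ : Fin n) = true ∧ x (⟨1, hp1⟩ : Fin n) = false)
    set C := cnt n k (fun x => x (⟨0, hp0⟩ : Fin n) = true)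
    have hR1' : ((n : ℝ) - 1) * A = ((k : ℝ) - 1) * C := by
      have := congrArg (Nat.cast : ℕ → ℝ) hR1
      push_cast [Nat.cast_sub hn1, Nat.cast_sub hk1'] at this
      linarith
    have hR2' : ((n : ℝ) - 1) * B = ((n : ℝ) - (k : ℝ)) * C := by
      have := congrArg (Nat.cast : ℕ → ℝ) hR2
      push_cast [Nat.cast_sub hn1, Nat.cast_sub hkn'] at this
      linarith
    have hKne : (k : ℝ) - 1 ≠ 0 := by
      have : (2 : ℝ) ≤ (k : ℝ) := by exact_mod_cast hk2
      linarith
    have hNKne : (n : ℝ) - (k : ℝ) ≠ 0 := by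
      have : (k : ℝ) ≤ (n : ℝ) - 1 := by
        have : (k : ℕ) ≤ n - 1 := hk1
        have h' : ((k : ℕ) : ℝ) ≤ ((n - 1 : ℕ) : ℝ) := by exact_mod_cast this
        rwa [Nat.cast_sub hn1, Nat.cast_one] at h'
      linarith
    have hN1ne : (n : ℝ) - 1 ≠ 0 := by
      have : (3 : ℝ) ≤ (n : ℝ) := by exact_mod_cast hn
      linarith
    push_cast [Nat.cast_sub hk1']
    field_simp
    ring_nf
    nlinarith [hR1', hR2', sq_nonneg ((n:ℝ) - (k:ℝ))]
  · -- none defined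
    rw [Finset.sum_congr rfl (fun x hx => if_neg (fun hd => hkr ((hdef x hx).mp hd)))]
    rw [Finset.filter_false_of_mem (fun x hx hd => hkr ((hdef x hx).mp hd))]
    simp

lemma partB (hn : 3 ≤ n) (k : ℕ) :
    ∑ x ∈ (cls n k).filter (fun x => x (⟨n - 1, by omega⟩ : Fin n) = false),
        (if D1def (ext x) n then D1 (ext x) n else 0)
      = (-1 / ((n : ℝ) - 1)) *
        ((((cls n k).filter (fun x => x (⟨n - 1, by omega⟩ : Fin n) = false)).filter
            (fun x => D1def (ext x) n)).card : ℝ) := by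
  have hpL : n - 1 < n := by omega
  have hp0 : 0 < n := by omega
  have hp1 : 1 < n := by omega
  have hp2 : 2 < n := by omega
  have hn1 : 1 ≤ n := by omega
  have hn2 : 2 ≤ n := by omega
  have hdef : ∀ x ∈ (cls n k).filter (fun x => x (⟨n - 1, hpL⟩ : Fin n) = false),
      (D1def (ext x) n ↔ (1 ≤ k ∧ k ≤ n - 2)) := by
    intro x hx
    have hx' : x ∈ cls n k ∧ x (⟨n - 1, hpL⟩ : Fin n) = false := by simpa using hx
    have hk := mem_cls hx'.1
    have hkn : k ≤ n := by
      rw [← hk]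
      simpa [oc] using Finset.card_filter_le Finset.univ (fun i => x i = true)
    unfold D1def
    rw [Nb_true_val hn1 x, Nb_false_val hn1 x, hk, hx'.2]
    simp only [Bool.false_eq_true, if_false]
    omega
  by_cases hkr : 1 ≤ k ∧ k ≤ n - 2
  · obtain ⟨hk1, hk2⟩ := hkr
    rw [Finset.sum_congr rfl (fun x hx => if_pos ((hdef x hx).mpr ⟨hk1, hk2⟩))]
    rw [Finset.filter_true_of_mem (fun x hx => (hdef x hx).mpr ⟨hk1, hk2⟩)]
    have hkn' : k ≤ n := by omega
    have hnk1 : 1 ≤ n - k := by omega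
    have e2 : k - 1 + 1 = k := by omega
    have hne2 : (⟨0, hp0⟩ : Fin n) ≠ (⟨1, hp1⟩ : Fin n) :=
      Fin.ne_of_val_ne (show (0 : ℕ) ≠ 1 by omega)
    have hne3 : (⟨0, hp0⟩ : Fin n) ≠ (⟨2, hp2⟩ : Fin n) :=
      Fin.ne_of_val_ne (show (0 : ℕ) ≠ 2 by omega)
    have hne4 : (⟨1, hp1⟩ : Fin n) ≠ (⟨2, hp2⟩ : Fin n) :=
      Fin.ne_of_val_ne (show (1 : ℕ) ≠ 2 by omega)
    have hD : ∀ x ∈ (cls n k).filter (fun x => x (⟨n - 1, hpL⟩ : Fin n) = false),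
        D1 (ext x) n = (Mb (ext x) n true : ℝ) / (k : ℝ)
          - (Mb (ext x) n false : ℝ) / ((n : ℝ) - (k : ℝ) - 1) := by
      intro x hx
      have hx' : x ∈ cls n k ∧ x (⟨n - 1, hpL⟩ : Fin n) = false := by simpa using hx
      have hk := mem_cls hx'.1
      unfold D1
      rw [Nb_true_val hn1 x, Nb_false_val hn1 x, hk, hx'.2]
      simp only [Bool.false_eq_true, if_false, Nat.sub_zero]
      rw [Nat.cast_sub hnk1, Nat.cast_sub hkn']
      norm_num
    rw [Finset.sum_congr rfl hD, Finset.sum_sub_distrib, ← Finset.sum_div, ← Finset.sum_div,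
      ← Nat.cast_sum, ← Nat.cast_sum]
    have hM1 : ∑ x ∈ (cls n k).filter (fun x => x (⟨n - 1, hpL⟩ : Fin n) = false),
        Mb (ext x) n true
        = (k - 1) * cnt n k (fun x => x (⟨0, hp0⟩ : Fin n) = false
            ∧ x (⟨1, hp1⟩ : Fin n) = true) := by
      rw [sum_Mb_gen hn k false true]
      simp only [Bool.false_eq_true, if_false, Nat.add_zero]
      rw [r3t k hne2 hne3 hne4 false true]
      simp only [Bool.false_eq_true, if_false, if_true, Nat.sub_zero]
    have hM0 : ∑ x ∈ (cls n k).filter (fun x => x (⟨n - 1, hpL⟩ : Fin n) = false),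
        Mb (ext x) n false
        = k * cnt n k (fun x => x (⟨0, hp0⟩ : Fin n) = false
            ∧ x (⟨1, hp1⟩ : Fin n) = false) := by
      rw [sum_Mb_gen hn k false false]
      simp only [Bool.false_eq_true, if_false, Nat.add_zero]
      rw [r3t k hne2 hne3 hne4 false false]
      simp only [Bool.false_eq_true, if_false, Nat.sub_zero]
    rw [hM1, hM0]
    have hcard : (((cls n k).filter (fun x => x (⟨n - 1, hpL⟩ : Fin n) = false)).card)
        = cnt n k (fun x => x (⟨n - 1, hpL⟩ : Fin n) = false) :=
      card_filter_congr (fun x => Iff.rfl)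
    rw [hcard, cnt_single k (⟨n - 1, hpL⟩ : Fin n) (⟨0, hp0⟩ : Fin n) false]
    have hR1 := r2 k hne2 false
    have hR2 := r2f k hne2 false
    simp only [Bool.false_eq_true, if_false, Nat.sub_zero] at hR1 hR2
    set A := cnt n k (fun x => x (⟨0, hp0⟩ : Fin n) = false ∧ x (⟨1, hp1⟩ : Fin n) = true)
    set B := cnt n k (fun x => x (⟨0, hp0⟩ : Fin n) = false ∧ x (⟨1, hp1⟩ : Fin n) = false)
    set C := cnt n k (fun x => x (⟨0, hp0⟩ : Fin n) = false)
    have hR1' : ((n : ℝ) - 1) * A = (k : ℝ) * C := by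
      have := congrArg (Nat.cast : ℕ → ℝ) hR1
      push_cast [Nat.cast_sub hn1] at this
      linarith
    have hR2' : ((n : ℝ) - 1) * B = ((n : ℝ) - (k : ℝ) - 1) * C := by
      have := congrArg (Nat.cast : ℕ → ℝ) hR2
      push_cast [Nat.cast_sub hn1, Nat.cast_sub hkn', Nat.cast_sub hnk1] at this
      linarith
    have hKne : (k : ℝ) ≠ 0 := by
      have : (1 : ℝ) ≤ (k : ℝ) := by exact_mod_cast hk1
      linarith
    have hNKne : (n : ℝ) - (k : ℝ) - 1 ≠ 0 := by
      have h' : ((k : ℕ) : ℝ) ≤ ((n - 2 : ℕ) : ℝ) := by exact_mod_cast hk2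
      rw [Nat.cast_sub hn2] at h'
      push_cast at h'
      linarith
    have hN1ne : (n : ℝ) - 1 ≠ 0 := by
      have : (3 : ℝ) ≤ (n : ℝ) := by exact_mod_cast hn
      linarith
    push_cast [Nat.cast_sub (show 1 ≤ k from hk1)]
    field_simp
    ring_nf
    nlinarith [hR1', hR2', sq_nonneg ((n:ℝ) - (k:ℝ))]
  · rw [Finset.sum_congr rfl (fun x hx => if_neg (fun hd => hkr ((hdef x hx).mp hd)))]
    rw [Finset.filter_false_of_mem (fun x hx hd => hkr ((hdef x hx).mp hd))]
    simp

lemma class_sum (hn : 3 ≤ n) (k : ℕ) :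
    ∑ x ∈ cls n k, (if D1def (ext x) n then D1 (ext x) n else 0)
      = (-1 / ((n : ℝ) - 1)) * (((cls n k).filter (fun x => D1def (ext x) n)).card : ℝ) := by
  have hpL : n - 1 < n := by omega
  have hsplit := Finset.sum_filter_add_sum_filter_not (cls n k)
    (fun x => x (⟨n - 1, hpL⟩ : Fin n) = true)
    (fun x => (if D1def (ext x) n then D1 (ext x) n else 0))
  rw [← hsplit]
  have hBconv : ∑ x ∈ (cls n k).filter (fun x => ¬ x (⟨n - 1, hpL⟩ : Fin n) = true),
      (if D1def (ext x) n then D1 (ext x) n else 0)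
      = ∑ x ∈ (cls n k).filter (fun x => x (⟨n - 1, hpL⟩ : Fin n) = false),
      (if D1def (ext x) n then D1 (ext x) n else 0) :=
    sum_filter_congr (fun x => by simp) _
  rw [hBconv, partA hn k, partB hn k]
  have hcards : (((cls n k).filter (fun x => D1def (ext x) n)).card : ℝ)
      = ((((cls n k).filter (fun x => x (⟨n - 1, hpL⟩ : Fin n) = true)).filter
            (fun x => D1def (ext x) n)).card : ℝ)
        + ((((cls n k).filter (fun x => x (⟨n - 1, hpL⟩ : Fin n) = false)).filter
            (fun x => D1def (ext x) n)).card : ℝ) := by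
    have h1 := Finset.card_filter_add_card_filter_not
      (s := (cls n k).filter (fun x => D1def (ext x) n))
      (p := fun x => x (⟨n - 1, hpL⟩ : Fin n) = true)
    have e1 : ((cls n k).filter (fun x => D1def (ext x) n)).filter
        (fun x => x (⟨n - 1, hpL⟩ : Fin n) = true)
        = ((cls n k).filter (fun x => x (⟨n - 1, hpL⟩ : Fin n) = true)).filter
            (fun x => D1def (ext x) n) := Finset.filter_comm _ _ _
    have e2 : ((cls n k).filter (fun x => D1def (ext x) n)).filter
        (fun x => ¬ x (⟨n - 1, hpL⟩ : Fin n) = true)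
        = ((cls n k).filter (fun x => x (⟨n - 1, hpL⟩ : Fin n) = false)).filter
            (fun x => D1def (ext x) n) := by
      rw [Finset.filter_comm]
      congr 1
      exact Finset.filter_congr (fun x _ => by simp)
    rw [e1, e2] at h1
    exact_mod_cast congrArg (Nat.cast : ℕ → ℝ) h1.symm
  rw [hcards]
  ring

lemma exists_perm_of_oc_eq {x y : Fin n → Bool} (h : oc x = oc y) :
    ∃ π : Equiv.Perm (Fin n), x ∘ π = y := by
  have hc1 : Fintype.card {i // y i = true} = Fintype.card {i // x i = true} := by
    rw [Fintype.card_subtype, Fintype.card_subtype]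
    exact h.symm
  have hc2 : Fintype.card {i // ¬ y i = true} = Fintype.card {i // ¬ x i = true} := by
    rw [Fintype.card_subtype_compl, Fintype.card_subtype_compl, hc1]
  let e1 : {i // y i = true} ≃ {i // x i = true} := Fintype.equivOfCardEq hc1
  let e2 : {i // ¬ y i = true} ≃ {i // ¬ x i = true} := Fintype.equivOfCardEq hc2
  refine ⟨(Equiv.sumCompl (fun i => y i = true)).symm.trans
    ((e1.sumCongr e2).trans (Equiv.sumCompl (fun i => x i = true))), ?_⟩
  funext i
  simp only [Function.comp_apply, Equiv.trans_apply]
  by_cases hy : y i = true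
  · rw [Equiv.sumCompl_symm_apply_of_pos (p := fun j => y j = true) hy]
    simp only [Equiv.sumCongr_apply, Sum.map_inl, Equiv.sumCompl_apply_inl]
    rw [hy]
    exact (e1 ⟨i, hy⟩).2
  · rw [Equiv.sumCompl_symm_apply_of_neg (p := fun j => y j = true) hy]
    simp only [Equiv.sumCongr_apply, Sum.map_inr, Equiv.sumCompl_apply_inr]
    have := (e2 ⟨i, hy⟩).2
    simp only [Bool.not_eq_true] at this hy
    rw [hy, this]

end MSbias

/-- For exchangeable binary random variables, conditional on the event
that `D̂_{n,1}` is defined, its expectation is exactly `−1/(n−1)`. -/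

theorem D1_conditional_bias (n : ℕ) (hn : 2 ≤ n) (w : (Fin n → Bool) → ℝ)
    (hw0 : ∀ x, 0 ≤ w x) (hw1 : ∑ x : Fin n → Bool, w x = 1)
    (hexch : ∀ (π : Equiv.Perm (Fin n)) (x : Fin n → Bool), w (x ∘ π) = w x)
    (hpos : 0 < ∑ x : Fin n → Bool, if D1def (ext x) n then w x else 0) :
    (∑ x : Fin n → Bool, if D1def (ext x) n then w x * D1 (ext x) n else 0)
        / (∑ x : Fin n → Bool, if D1def (ext x) n then w x else 0)
      = -1 / ((n : ℝ) - 1) := by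
  by_cases hn3 : 3 ≤ n
  · -- main case
    have hfib : ∀ (f : (Fin n → Bool) → ℝ), ∑ x : Fin n → Bool, f x
        = ∑ k ∈ Finset.range (n + 1), ∑ x ∈ MSbias.cls n k, f x := by
      intro f
      rw [← Finset.sum_fiberwise_of_maps_to (g := fun x : Fin n → Bool => MSbias.oc x)
        (fun x _ => Finset.mem_range.mpr (Nat.lt_succ_of_le (MSbias.oc_le x))) f]
      refine Finset.sum_congr rfl fun k _ => ?_
      exact MSbias.sum_filter_congr (fun x => Iff.rfl) f
    have key : ∀ k : ℕ, ∑ x ∈ MSbias.cls n k, (if D1def (ext x) n then w x * D1 (ext x) n else 0)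
        = (-1 / ((n : ℝ) - 1)) * ∑ x ∈ MSbias.cls n k, (if D1def (ext x) n then w x else 0) := by
      intro k
      rcases Finset.eq_empty_or_nonempty (MSbias.cls n k) with he | ⟨x₀, hx₀⟩
      · rw [he]
        simp
      · have hw : ∀ x ∈ MSbias.cls n k, w x = w x₀ := by
          intro x hx
          obtain ⟨π, hπ⟩ := MSbias.exists_perm_of_oc_eq ((MSbias.mem_cls hx₀).trans (MSbias.mem_cls hx).symm)
          rw [← hπ, hexch]
        have hL : ∑ x ∈ MSbias.cls n k, (if D1def (ext x) n then w x * D1 (ext x) n else 0)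
            = w x₀ * ∑ x ∈ MSbias.cls n k, (if D1def (ext x) n then D1 (ext x) n else 0) := by
          rw [Finset.mul_sum]
          refine Finset.sum_congr rfl fun x hx => ?_
          rw [hw x hx] at *
          split_ifs <;> ring
        have hR : ∑ x ∈ MSbias.cls n k, (if D1def (ext x) n then w x else 0)
            = w x₀ * (((MSbias.cls n k).filter (fun x => D1def (ext x) n)).card : ℝ) := by
          rw [← Finset.sum_boole, Finset.mul_sum]
          refine Finset.sum_congr rfl fun x hx => ?_
          rw [hw x hx]
          split_ifs <;> ring
        rw [hL, MSbias.class_sum hn3 k, hR]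
        ring
    have hnum : ∑ x : Fin n → Bool, (if D1def (ext x) n then w x * D1 (ext x) n else 0)
        = (-1 / ((n : ℝ) - 1)) * ∑ x : Fin n → Bool, (if D1def (ext x) n then w x else 0) := by
      rw [hfib (fun x => if D1def (ext x) n then w x * D1 (ext x) n else 0),
        hfib (fun x => if D1def (ext x) n then w x else 0), Finset.mul_sum]
      exact Finset.sum_congr rfl fun k _ => key k
    rw [hnum, mul_div_assoc, div_self (ne_of_gt hpos), mul_one]
  · -- n = 2 : no sequence is defined, contradiction with hpos
    exfalso
    have hn2 : n = 2 := by omega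
    subst hn2
    have hnd : ∀ x : Fin 2 → Bool, ¬ D1def (ext x) 2 := by
      rintro x ⟨h1, h2⟩
      obtain ⟨j1, hj1⟩ := Finset.card_pos.mp h1
      obtain ⟨j2, hj2⟩ := Finset.card_pos.mp h2
      simp only [Finset.mem_filter, Finset.mem_range] at hj1 hj2
      have e1 : j1 = 0 := by omega
      have e2 : j2 = 0 := by omega
      subst e1; subst e2
      rw [hj1.2] at hj2
      exact Bool.noConfusion hj2.2
    rw [Finset.sum_congr rfl (fun x _ => if_neg (hnd x))] at hpos
    simp at hpos
end
end

section
/- FWER control of the Šidák stepdown procedure under independence: let ρ_1,...,ρ_s be independent p-values with ρ_i stochastically no smaller than uniform on [0,1] under each true null H_0^i. Order them as ρ_(1) ≤ ... ≤ ρ_(s) and reject H_0^{(1)},...,H_0^{(r)} where r is the largest index such that ρ_(j) < 1 − (1−α)^{1/(s−j+1)} for all j ≤ r. Then the probability of rejecting at least one true null hypothesis is at most α. -/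
open Finset
open scoped BigOperators Classical

noncomputable section

/-- The p-values sorted in nondecreasing order, as a list. -/
def sortedP (s : ℕ) (ρ : Fin s → ℝ) : List ℝ :=
  Multiset.sort (↑(List.ofFn ρ) : Multiset ℝ) (· ≤ ·)

/-- The Šidák stepdown critical value `α_j = 1 − (1−α)^{1/(s−j+1)}` (for the j-th smallest
p-value, `1 ≤ j ≤ s`). -/
def sidakCrit (α : ℝ) (s j : ℕ) : ℝ :=
  1 - (1 - α) ^ ((1 : ℝ) / ((s : ℝ) - (j : ℝ) + 1))

/-- The number `r` of rejections of the stepdown procedure: the largest `r ≤ s` such that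
`ρ_(j) < α_j` for all `j ≤ r` (0-indexed: `sorted[j] < α_{j+1}` for all `j < r`). -/
def numRej (s : ℕ) (α : ℝ) (ρ : Fin s → ℝ) : ℕ :=
  Nat.findGreatest
    (fun r => ∀ j < r, (sortedP s ρ).getD j 0 < sidakCrit α s (j + 1)) s

/-- Hypothesis `i` is rejected by the stepdown procedure: its p-value is one of the `r`
smallest order statistics, where `r = numRej`. -/
def rejected (s : ℕ) (α : ℝ) (ρ : Fin s → ℝ) (i : Fin s) : Prop :=
  ∃ j < numRej s α ρ, (sortedP s ρ).getD j 0 = ρ i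

/-- Codomain family used to express that the true-null p-values are mutually independent
and independent of the (joint vector of the) remaining p-values. -/
def depCod (s : ℕ) (I : Finset (Fin s)) : Option {i : Fin s // i ∈ I} → Type :=
  fun o => Option.rec (Fin s → ℝ) (fun _ => ℝ) o

instance depCodMS (s : ℕ) (I : Finset (Fin s)) : ∀ o, MeasurableSpace (depCod s I o) :=
  fun o => Option.rec (inferInstance : MeasurableSpace (Fin s → ℝ))
    (fun _ => (inferInstance : MeasurableSpace ℝ)) o

/-- The family of maps: each true-null p-value separately, together with the joint vector of
the non-null p-values (true-null coordinates zeroed out). -/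
def depFun {Ω : Type*} (s : ℕ) (I : Finset (Fin s)) (ρ : Fin s → Ω → ℝ) :
    ∀ o : Option {i : Fin s // i ∈ I}, Ω → depCod s I o :=
  fun o => Option.rec (fun ω j => if j ∈ I then 0 else ρ j ω) (fun i ω => ρ i.1 ω) o

/-!
With `t = #I` true nulls, a true null can only be rejected if the smallest true-null p-value
lies below `α_{s-t+1} = 1 - (1 - α)^{1/t}`: either it is rejected at a step `j ≤ s - t`, and the
critical values increase in `j`, or the procedure gets past step `s - t + 1`, and by pigeonhole
one of the `s - t + 1` smallest p-values belongs to a true null. By independence and validity the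
smallest of `t` true-null p-values lies below `c` with probability at most `1 - (1 - c)^t`,
which is `α` for this `c`.
-/

theorem List.Pairwise.succ_le_countP_le_getElem {α : Type*} [Preorder α] [DecidableLE α]
    {L : List α} (hL : L.Pairwise (· ≤ ·)) {m : ℕ} (hm : m < L.length) :
    m + 1 ≤ L.countP (· ≤ L[m]) := by
  have hprefix : (L.take (m + 1)).countP (· ≤ L[m]) = m + 1 := by
    rw [List.countP_eq_length.2, List.length_take, min_eq_left hm]
    intro x hx
    obtain ⟨i, hi, rfl⟩ := List.mem_take_iff_getElem.1 hx
    simpa using hL.rel_get_of_le (a := ⟨i, by omega⟩) (b := ⟨m, hm⟩) (by simp; omega)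
  exact hprefix ▸ (List.take_sublist _ _).countP_le

lemma sortedP_length (s : ℕ) (ρ : Fin s → ℝ) : (sortedP s ρ).length = s := by
  simp [sortedP]

lemma card_filter_le_eq_countP_sortedP (s : ℕ) (ρ : Fin s → ℝ) (v : ℝ) :
    #{k | ρ k ≤ v} = (sortedP s ρ).countP (· ≤ v) := by
  rw [← Multiset.coe_countP, sortedP, Multiset.sort_eq, ← Fin.univ_val_map, Multiset.countP_map]
  rfl

lemma exists_mem_le_sortedP_getD (s : ℕ) (ρ : Fin s → ℝ) (I : Finset (Fin s)) {m : ℕ}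
    (hm : m < s) (hI : s ≤ m + #I) : ∃ k ∈ I, ρ k ≤ (sortedP s ρ).getD m 0 := by
  have hm' : m < (sortedP s ρ).length := by rwa [sortedP_length]
  have hcount : m + 1 ≤ #{k | ρ k ≤ (sortedP s ρ).getD m 0} := by
    rw [card_filter_le_eq_countP_sortedP, List.getD_eq_getElem _ _ hm']
    exact (Multiset.pairwise_sort _ _).succ_le_countP_le_getElem hm'
  by_contra! h
  have hsub : ({k | ρ k ≤ (sortedP s ρ).getD m 0} : Finset (Fin s)) ⊆ Iᶜ := by
    intro k hk
    simp only [Finset.mem_filter, Finset.mem_univ, true_and] at hk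
    exact Finset.mem_compl.2 fun hkI => (h k hkI).not_ge hk
  have := (Finset.card_le_card hsub).trans_eq (Finset.card_compl I)
  simp only [Fintype.card_fin] at this
  omega

section sidakCrit

variable {α : ℝ} {s : ℕ}

lemma sidakCrit_le_sidakCrit (hα : 0 ≤ α) (hα1 : α < 1) {j j' : ℕ} (hjj' : j ≤ j')
    (hj' : j' ≤ s) : sidakCrit α s j ≤ sidakCrit α s j' := by
  have hj's : (j' : ℝ) ≤ s := by exact_mod_cast hj'
  have hjj'R : (j : ℝ) ≤ j' := by exact_mod_cast hjj'
  refine sub_le_sub_left (Real.rpow_le_rpow_of_exponent_ge (by linarith) (by linarith) ?_) 1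
  exact one_div_le_one_div_of_le (by linarith) (by linarith)

lemma sidakCrit_nonneg (hα : 0 ≤ α) (hα1 : α ≤ 1) {j : ℕ} (hj : j ≤ s) :
    0 ≤ sidakCrit α s j := by
  have hjs : (j : ℝ) ≤ s := by exact_mod_cast hj
  exact sub_nonneg.2 (Real.rpow_le_one (by linarith) (by linarith) (by positivity))

lemma sidakCrit_le_one (hα1 : α ≤ 1) (j : ℕ) : sidakCrit α s j ≤ 1 :=
  sub_le_self 1 (Real.rpow_nonneg (by linarith) _)

lemma one_sub_sidakCrit_pow (hα1 : α ≤ 1) {t : ℕ} (ht : t ≠ 0) (hts : t ≤ s) :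
    (1 - sidakCrit α s (s - t + 1)) ^ t = 1 - α := by
  have hexp : (s : ℝ) - ((s - t + 1 : ℕ) : ℝ) + 1 = t := by
    rw [Nat.cast_add, Nat.cast_sub hts]; push_cast; ring
  rw [sidakCrit, sub_sub_cancel, hexp, one_div, Real.rpow_inv_natCast_pow (by linarith) ht]

end sidakCrit

lemma numRej_le (s : ℕ) (α : ℝ) (p : Fin s → ℝ) : numRej s α p ≤ s :=
  Nat.findGreatest_le s

lemma sortedP_getD_lt_sidakCrit {s : ℕ} {α : ℝ} {p : Fin s → ℝ} {j : ℕ}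
    (hj : j < numRej s α p) : (sortedP s p).getD j 0 < sidakCrit α s (j + 1) :=
  Nat.findGreatest_spec (P := fun r => ∀ j < r, (sortedP s p).getD j 0 < sidakCrit α s (j + 1))
    (Nat.zero_le s) (fun _ h => absurd h (Nat.not_lt_zero _)) j hj

theorem exists_lt_sidakCrit_of_rejected {s : ℕ} {α : ℝ} (hα : 0 ≤ α) (hα1 : α < 1)
    {p : Fin s → ℝ} {I : Finset (Fin s)} (h : ∃ i ∈ I, rejected s α p i) :
    ∃ k ∈ I, p k < sidakCrit α s (s - #I + 1) := by
  obtain ⟨i, hi, j, hj, hji⟩ := h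
  have hIs : #I ≤ s := by simpa using I.card_le_univ
  have hI : 0 < #I := Finset.card_pos.2 ⟨i, hi⟩
  rcases le_total j (s - #I) with hjI | hIj
  · refine ⟨i, hi, ?_⟩
    rw [← hji]
    exact (sortedP_getD_lt_sidakCrit hj).trans_le
      (sidakCrit_le_sidakCrit hα hα1 (by omega) (by omega))
  · have hm : s - #I < numRej s α p := hIj.trans_lt hj
    obtain ⟨k, hk, hpk⟩ := exists_mem_le_sortedP_getD s p I
      (hm.trans_le (numRej_le s α p)) (by omega)
    exact ⟨k, hk, hpk.trans_lt (sortedP_getD_lt_sidakCrit hm)⟩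

open MeasureTheory ProbabilityTheory in
theorem measure_exists_lt_le_one_sub_pow {ι Ω : Type*} [Fintype ι] [MeasurableSpace Ω]
    {μ : Measure Ω} [IsProbabilityMeasure μ] {X : ι → Ω → ℝ} (hX : ∀ i, Measurable (X i))
    (hind : iIndepFun X μ) {c : ℝ} {q : ENNReal} (hq : ∀ i, μ {ω | X i ω < c} ≤ q) :
    μ {ω | ∃ i, X i ω < c} ≤ 1 - (1 - q) ^ Fintype.card ι := by
  have hcompl : ∀ i, X i ⁻¹' Set.Ici c = {ω | X i ω < c}ᶜ := fun i => by ext; simp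
  have hexists : {ω | ∃ i, X i ω < c} = (⋂ i, X i ⁻¹' Set.Ici c)ᶜ := by ext; simp
  rw [hexists, prob_compl_eq_one_sub (MeasurableSet.iInter fun i => hX i measurableSet_Ici),
    hind.meas_iInter fun i => ⟨Set.Ici c, measurableSet_Ici, rfl⟩]
  refine tsub_le_tsub_left ?_ 1
  calc (1 - q) ^ Fintype.card ι = ∏ _i, (1 - q) := by simp
    _ ≤ ∏ i, μ (X i ⁻¹' Set.Ici c) := Finset.prod_le_prod' fun i _ => by
        rw [hcompl, prob_compl_eq_one_sub (measurableSet_lt (hX i) measurable_const)]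
        exact tsub_le_tsub_left (hq i) 1

lemma ENNReal.one_sub_one_sub_ofReal_pow {c : ℝ} (hc0 : 0 ≤ c) (hc1 : c ≤ 1) (n : ℕ) :
    1 - (1 - ENNReal.ofReal c) ^ n = ENNReal.ofReal (1 - (1 - c) ^ n) := by
  rw [← ENNReal.ofReal_one, ← ENNReal.ofReal_sub _ hc0, ← ENNReal.ofReal_pow (by linarith),
    ← ENNReal.ofReal_sub _ (by positivity)]

/-- FWER control of the Šidák stepdown procedure: if the p-values of true
null hypotheses (indexed by `I`) are valid (stochastically no smaller than uniform), mutually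
independent, and independent of the remaining p-values, then the probability of rejecting at
least one true null is at most α. -/
theorem sidak_stepdown_fwer {Ω : Type*} [MeasurableSpace Ω]
    (μ : MeasureTheory.Measure Ω) [MeasureTheory.IsProbabilityMeasure μ]
    (s : ℕ) (α : ℝ) (hα : 0 < α) (hα1 : α < 1)
    (ρ : Fin s → Ω → ℝ) (hmeas : ∀ i, Measurable (ρ i))
    (I : Finset (Fin s))
    (hvalid : ∀ i ∈ I, ∀ u : ℝ, 0 ≤ u → u ≤ 1 →
      μ {ω | ρ i ω ≤ u} ≤ ENNReal.ofReal u)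
    (hindep : ProbabilityTheory.iIndepFun (m := depCodMS s I) (depFun s I ρ) μ) :
    μ {ω | ∃ i ∈ I, rejected s α (fun i' => ρ i' ω) i} ≤ ENNReal.ofReal α := by
  rcases I.eq_empty_or_nonempty with rfl | hI
  · simp
  set c := sidakCrit α s (s - #I + 1)
  have hIs : #I ≤ s := by simpa using I.card_le_univ
  have hc0 : 0 ≤ c := sidakCrit_nonneg hα.le hα1.le (by have := hI.card_pos; omega)
  have hc1 : c ≤ 1 := sidakCrit_le_one hα1.le _
  -- `depFun s I ρ (some k)` unfolds to `ρ k`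
  have hindI : ProbabilityTheory.iIndepFun (fun k : I => ρ k) μ :=
    hindep.precomp (Option.some_injective _)
  have hvalidI : ∀ k : I, μ {ω | ρ k ω < c} ≤ ENNReal.ofReal c := fun k =>
    (MeasureTheory.measure_mono fun _ (h : ρ k _ < c) => h.le).trans (hvalid k k.2 c hc0 hc1)
  calc μ {ω | ∃ i ∈ I, rejected s α (fun i' => ρ i' ω) i}
      ≤ μ {ω | ∃ k : I, ρ k ω < c} := MeasureTheory.measure_mono fun ω hω => by
        obtain ⟨k, hk, hlt⟩ := exists_lt_sidakCrit_of_rejected hα.le hα1 hω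
        exact ⟨⟨k, hk⟩, hlt⟩
    _ ≤ 1 - (1 - ENNReal.ofReal c) ^ Fintype.card I :=
        measure_exists_lt_le_one_sub_pow (X := fun k : I => ρ k) (fun k => hmeas k) hindI hvalidI
    _ = ENNReal.ofReal α := by
        rw [ENNReal.one_sub_one_sub_ofReal_pow hc0 hc1, Fintype.card_coe,
          one_sub_sidakCrit_pow hα1.le hI.card_pos.ne' hIs, sub_sub_cancel]
end
end
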